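/- There exists an absolute constant C > 0 with the following property. Let A = (a_{ijk}) be a 2×2×2 integer hypermatrix whose associated trilinear form f is irreducible as a polynomial in ℤ[x₁,x₂,y₁,y₂,z₁,z₂]. Then for all real numbers X₁,X₂,Y₁,Y₂,Z₁,Z₂ ≥ 1, the number of triples (x,y,z) ∈ ℤ²×ℤ²×ℤ² with |x_i| ≤ X_i, |y_i| ≤ Y_i, |z_i| ≤ Z_i, gcd(x₁,x₂) = gcd(y₁,y₂) = gcd(z₁,z₂) = 1, f(x,y,z) = 0 and Δ_xy(z) = 0 is at most C·(X₁X₂ + Y₁Y₂). -/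

import Mathlib

open MvPolynomial

/-!
Write `f = xᵀ M(z) y` with `M(z) = z₁ A + z₂ B`, so that `Δ_xy(z) = det M(z)`. Irreducibility of `f`
gives two facts. First, `M(z) ≠ 0` for primitive `z`, since otherwise `f` is divisible by the
linear form vanishing at `z`. Second, `Δ_xy` is not identically zero: otherwise `A = u vᵀ` and
`B = w sᵀ` have rank at most one, the mixed coefficient `det(u, w) det(v, s)` vanishes, and `f`
splits off the linear factor `u · x` or `s · y`. Hence `Δ_xy` has at most four primitive zeros `z`,
and for each of them `M(z)` has rank one, so `xᵀ M(z) y = 0` forces `x` into the left kernel or `y`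
into the right kernel of `M(z)`, each containing at most two primitive vectors. As the boxes hold at
most `9 X₁ X₂` and `9 Y₁ Y₂` lattice points, this leaves at most `72 (X₁ X₂ + Y₁ Y₂)` triples.
-/

open Finset

section CommRing

variable {R : Type*} [CommRing R]

theorem IsCoprime.exists_eq_mul_of_mul_eq_mul {p q a₁ a₂ : R} (h : IsCoprime p q)
    (heq : p * a₂ = q * a₁) : ∃ t, a₁ = p * t ∧ a₂ = q * t := by
  obtain ⟨r, s, hrs⟩ := h
  exact ⟨r * a₁ + s * a₂, by linear_combination (-a₁) * hrs + (-s) * heq,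
    by linear_combination (-a₂) * hrs + r * heq⟩

theorem IsCoprime.exists_eq_mul_of_mul_add_mul_eq_zero {p q a₁ a₂ : R} (h : IsCoprime p q)
    (heq : p * a₁ + q * a₂ = 0) : ∃ t, a₁ = q * t ∧ a₂ = -(p * t) := by
  obtain ⟨t, h₁, h₂⟩ :=
    h.symm.neg_right.exists_eq_mul_of_mul_eq_mul (by linear_combination heq : q * a₂ = -p * a₁)
  exact ⟨t, h₁, by linear_combination h₂⟩

variable [NoZeroDivisors R]

theorem cross_eq_of_orthogonal {u₁ u₂ v₁ v₂ w₁ w₂ : R} (hu : u₁ * w₁ + u₂ * w₂ = 0)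
    (hv : v₁ * w₁ + v₂ * w₂ = 0) (hw : ¬(w₁ = 0 ∧ w₂ = 0)) : u₁ * v₂ = u₂ * v₁ := by
  rw [← sub_eq_zero]
  by_contra hne
  refine hw ⟨(mul_eq_zero.1 ?_).resolve_left hne, (mul_eq_zero.1 ?_).resolve_left hne⟩
  · linear_combination v₂ * hu - u₂ * hv
  · linear_combination u₁ * hv - v₁ * hu

theorem vecMul_eq_zero_or_mulVec_eq_zero_of_det_eq_zero {m₁₁ m₁₂ m₂₁ m₂₂ x₁ x₂ y₁ y₂ : R}
    (hdet : m₁₁ * m₂₂ = m₁₂ * m₂₁)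
    (h : x₁ * (m₁₁ * y₁ + m₁₂ * y₂) + x₂ * (m₂₁ * y₁ + m₂₂ * y₂) = 0) :
    (m₁₁ * x₁ + m₂₁ * x₂ = 0 ∧ m₁₂ * x₁ + m₂₂ * x₂ = 0) ∨
      (m₁₁ * y₁ + m₁₂ * y₂ = 0 ∧ m₂₁ * y₁ + m₂₂ * y₂ = 0) := by
  by_cases hy : m₁₁ * y₁ + m₁₂ * y₂ = 0 ∧ m₂₁ * y₁ + m₂₂ * y₂ = 0
  · exact Or.inr hy
  -- the rows of `adj M` are orthogonal to `M y ≠ 0`, and so is `x`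
  have h₁ := cross_eq_of_orthogonal (v₁ := m₂₁) (v₂ := -m₁₁) h
    (by linear_combination (-y₂) * hdet) hy
  have h₂ := cross_eq_of_orthogonal (v₁ := m₂₂) (v₂ := -m₁₂) h
    (by linear_combination y₁ * hdet) hy
  exact Or.inl ⟨by linear_combination -h₁, by linear_combination -h₂⟩

end CommRing

namespace Int

theorem exists_gcd_eq_one_mul (v₁ v₂ : ℤ) :
    ∃ g w₁ w₂ : ℤ, gcd w₁ w₂ = 1 ∧ v₁ = w₁ * g ∧ v₂ = w₂ * g := by
  rcases Nat.eq_zero_or_pos (gcd v₁ v₂) with h | h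
  · obtain ⟨rfl, rfl⟩ := gcd_eq_zero_iff.1 h
    exact ⟨0, 1, 0, by decide, by simp, by simp⟩
  · obtain ⟨w₁, w₂, hw, h₁, h₂⟩ := exists_gcd_one h
    exact ⟨_, w₁, w₂, hw, h₁, h₂⟩

theorem exists_primitive_outer_of_det_eq_zero {α β γ δ : ℤ} (h : α * δ = β * γ) :
    ∃ u₁ u₂ v₁ v₂ : ℤ, gcd u₁ u₂ = 1 ∧
      α = u₁ * v₁ ∧ β = u₁ * v₂ ∧ γ = u₂ * v₁ ∧ δ = u₂ * v₂ := by
  obtain ⟨g, u₁, u₂, hu, rfl, rfl⟩ := exists_gcd_eq_one_mul α γ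
  by_cases hg : g = 0
  · subst hg
    obtain ⟨k, w₁, w₂, hw, rfl, rfl⟩ := exists_gcd_eq_one_mul β δ
    exact ⟨w₁, w₂, 0, k, hw, by ring, rfl, by ring, rfl⟩
  · have hud : u₁ * δ = u₂ * β := mul_left_cancel₀ hg (by linear_combination h)
    obtain ⟨k, rfl, rfl⟩ := (isCoprime_iff_gcd_eq_one.2 hu).exists_eq_mul_of_mul_eq_mul hud
    exact ⟨u₁, u₂, g, k, hu, rfl, rfl, rfl, rfl⟩

theorem eq_or_eq_neg_of_cross_eq {u v : ℤ × ℤ} (hu : gcd u.1 u.2 = 1) (hv : gcd v.1 v.2 = 1)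
    (h : u.1 * v.2 = u.2 * v.1) : v = u ∨ v = -u := by
  obtain ⟨t, h₁, h₂⟩ := (isCoprime_iff_gcd_eq_one.2 hu).exists_eq_mul_of_mul_eq_mul h
  rw [h₁, h₂, gcd_mul_right, hu, one_mul] at hv
  rcases natAbs_eq_iff.1 hv with rfl | rfl
  · exact Or.inl (Prod.ext (by simpa using h₁) (by simpa using h₂))
  · exact Or.inr (Prod.ext (by simpa using h₁) (by simpa using h₂))

theorem exists_finset_primitive_zeros_linear {a b : ℤ} (hab : ¬(a = 0 ∧ b = 0)) :
    ∃ K : Finset (ℤ × ℤ), #K ≤ 2 ∧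
      ∀ x : ℤ × ℤ, gcd x.1 x.2 = 1 → a * x.1 + b * x.2 = 0 → x ∈ K := by
  by_cases hex : ∃ u : ℤ × ℤ, gcd u.1 u.2 = 1 ∧ a * u.1 + b * u.2 = 0
  · obtain ⟨u, hu, hau⟩ := hex
    refine ⟨{u, -u}, card_le_two, fun x hx hax => ?_⟩
    have hcross : u.1 * x.2 = u.2 * x.1 :=
      cross_eq_of_orthogonal (w₁ := a) (w₂ := b) (by linear_combination hau)
        (by linear_combination hax) hab
    rcases eq_or_eq_neg_of_cross_eq hu hx hcross with rfl | rfl <;> simp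
  · exact ⟨∅, by simp, fun x hx hax => (hex ⟨x, hx, hax⟩).elim⟩

theorem exists_finset_primitive_common_zeros {a b c d : ℤ}
    (h : ¬(a = 0 ∧ b = 0 ∧ c = 0 ∧ d = 0)) :
    ∃ K : Finset (ℤ × ℤ), #K ≤ 2 ∧ ∀ x : ℤ × ℤ, gcd x.1 x.2 = 1 →
      a * x.1 + b * x.2 = 0 → c * x.1 + d * x.2 = 0 → x ∈ K := by
  by_cases hab : a = 0 ∧ b = 0
  · obtain ⟨K, hK, hmem⟩ := exists_finset_primitive_zeros_linear (a := c) (b := d) (by tauto)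
    exact ⟨K, hK, fun x hx _ hcd => hmem x hx hcd⟩
  · obtain ⟨K, hK, hmem⟩ := exists_finset_primitive_zeros_linear hab
    exact ⟨K, hK, fun x hx hax _ => hmem x hx hax⟩

theorem exists_finsets_of_bilinear_eq_zero {m₁₁ m₁₂ m₂₁ m₂₂ : ℤ}
    (hdet : m₁₁ * m₂₂ = m₁₂ * m₂₁) (hM : ¬(m₁₁ = 0 ∧ m₁₂ = 0 ∧ m₂₁ = 0 ∧ m₂₂ = 0)) :
    ∃ Kx Ky : Finset (ℤ × ℤ), #Kx ≤ 2 ∧ #Ky ≤ 2 ∧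
      ∀ x y : ℤ × ℤ, gcd x.1 x.2 = 1 → gcd y.1 y.2 = 1 →
        x.1 * (m₁₁ * y.1 + m₁₂ * y.2) + x.2 * (m₂₁ * y.1 + m₂₂ * y.2) = 0 → x ∈ Kx ∨ y ∈ Ky := by
  obtain ⟨Kx, hKx, hx⟩ :=
    exists_finset_primitive_common_zeros (a := m₁₁) (b := m₂₁) (c := m₁₂) (d := m₂₂) (by tauto)
  obtain ⟨Ky, hKy, hy⟩ :=
    exists_finset_primitive_common_zeros (a := m₁₁) (b := m₁₂) (c := m₂₁) (d := m₂₂) (by tauto)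
  refine ⟨Kx, Ky, hKx, hKy, fun x y hxp hyp h => ?_⟩
  rcases vecMul_eq_zero_or_mulVec_eq_zero_of_det_eq_zero hdet h with ⟨h₁, h₂⟩ | ⟨h₁, h₂⟩
  · exact Or.inl (hx x hxp h₁ h₂)
  · exact Or.inr (hy y hyp h₁ h₂)

theorem exists_linear_factor_of_primitive_root {d₁ d₂ d₃ p q : ℤ} (hpq : gcd p q = 1)
    (hroot : d₁ * p ^ 2 + d₂ * p * q + d₃ * q ^ 2 = 0) :
    ∃ e₁ e₂ : ℤ, ∀ w₁ w₂ : ℤ,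
      d₁ * w₁ ^ 2 + d₂ * w₁ * w₂ + d₃ * w₂ ^ 2 = (q * w₁ - p * w₂) * (e₁ * w₁ + e₂ * w₂) := by
  obtain ⟨r, s, hrs⟩ := (isCoprime_iff_gcd_eq_one.2 hpq).pow (m := 2) (n := 2)
  exact ⟨s * d₁ * q - r * (d₃ * q + d₂ * p), s * (d₁ * p + d₂ * q) - r * d₃ * p, fun w₁ w₂ => by
    linear_combination (-(d₁ * w₁ ^ 2 + d₂ * w₁ * w₂ + d₃ * w₂ ^ 2)) * hrs +
      (s * w₂ ^ 2 + r * w₁ ^ 2) * hroot⟩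

theorem exists_finset_primitive_zeros_quadratic {d₁ d₂ d₃ : ℤ}
    (hd : ¬(d₁ = 0 ∧ d₂ = 0 ∧ d₃ = 0)) :
    ∃ K : Finset (ℤ × ℤ), #K ≤ 4 ∧ ∀ z : ℤ × ℤ, gcd z.1 z.2 = 1 →
      d₁ * z.1 ^ 2 + d₂ * z.1 * z.2 + d₃ * z.2 ^ 2 = 0 → z ∈ K := by
  by_cases hex : ∃ z : ℤ × ℤ, gcd z.1 z.2 = 1 ∧ d₁ * z.1 ^ 2 + d₂ * z.1 * z.2 + d₃ * z.2 ^ 2 = 0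
  swap
  · exact ⟨∅, by simp, fun z hz hQ => (hex ⟨z, hz, hQ⟩).elim⟩
  obtain ⟨⟨p, q⟩, hpq, hroot⟩ := hex
  obtain ⟨e₁, e₂, hfac⟩ := exists_linear_factor_of_primitive_root hpq hroot
  have he : ¬(e₁ = 0 ∧ e₂ = 0) := by
    rintro ⟨rfl, rfl⟩
    have h₁₀ := hfac 1 0
    have h₀₁ := hfac 0 1
    have h₁₁ := hfac 1 1
    exact hd ⟨by linear_combination h₁₀, by linear_combination h₁₁ - h₁₀ - h₀₁,
      by linear_combination h₀₁⟩
  have hqp : ¬(q = 0 ∧ -p = 0) := by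
    rintro ⟨rfl, hp⟩
    simp_all
  obtain ⟨K₁, hK₁, h₁⟩ := exists_finset_primitive_zeros_linear hqp
  obtain ⟨K₂, hK₂, h₂⟩ := exists_finset_primitive_zeros_linear he
  refine ⟨K₁ ∪ K₂, (card_union_le _ _).trans (by omega), fun z hz hQ => ?_⟩
  rw [hfac] at hQ
  rcases mul_eq_zero.1 hQ with h | h
  · exact mem_union_left _ (h₁ z hz (by linear_combination h))
  · exact mem_union_right _ (h₂ z hz h)

end Int

theorem Set.ncard_le_card_mul_of_fibers {α β : Type*} {T : Set α} {S : Finset β} {g : α → β}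
    (hg : Set.MapsTo g T S) (n : ℕ)
    (hfib : ∀ a ∈ T, ∃ F : Finset α, #F ≤ n ∧ ∀ a' ∈ T, g a' = g a → a' ∈ F) :
    T.ncard ≤ #S * n := by
  classical
  have hF : ∀ b, ∃ F : Finset α, #F ≤ n ∧ ∀ a ∈ T, g a = b → a ∈ F := by
    intro b
    by_cases hb : ∃ a ∈ T, g a = b
    · obtain ⟨a, ha, rfl⟩ := hb
      exact hfib a ha
    · exact ⟨∅, by simp, fun a ha hab => (hb ⟨a, ha, hab⟩).elim⟩
  choose F hFn hFT using hF
  calc T.ncard ≤ #(S.biUnion F) := by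
        rw [← Set.ncard_coe_finset]
        refine Set.ncard_le_ncard (fun a ha => ?_) (Finset.finite_toSet _)
        exact Finset.mem_coe.2 (Finset.mem_biUnion.2 ⟨g a, hg ha, hFT _ a ha rfl⟩)
    _ ≤ #S * n := card_biUnion_le_card_mul _ _ _ fun b _ => hFn b

noncomputable def latticeBox (X₁ X₂ : ℝ) : Finset (ℤ × ℤ) :=
  Icc (-⌊X₁⌋) ⌊X₁⌋ ×ˢ Icc (-⌊X₂⌋) ⌊X₂⌋

theorem mem_latticeBox {X₁ X₂ : ℝ} {x : ℤ × ℤ} (h₁ : (|x.1| : ℝ) ≤ X₁) (h₂ : (|x.2| : ℝ) ≤ X₂) :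
    x ∈ latticeBox X₁ X₂ :=
  mem_product.2 ⟨mem_Icc.2 (abs_le.1 (Int.le_floor.2 (by exact_mod_cast h₁))),
    mem_Icc.2 (abs_le.1 (Int.le_floor.2 (by exact_mod_cast h₂)))⟩

theorem card_Icc_neg_floor_le {A : ℝ} (hA : 1 ≤ A) : (#(Icc (-⌊A⌋) ⌊A⌋) : ℝ) ≤ 3 * A := by
  have h₁ : (1 : ℤ) ≤ ⌊A⌋ := Int.le_floor.2 (by exact_mod_cast hA)
  have hcard : (#(Icc (-⌊A⌋) ⌊A⌋) : ℤ) = 2 * ⌊A⌋ + 1 := by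
    rw [Int.card_Icc_of_le _ _ (by omega)]
    ring
  have hcard' : (#(Icc (-⌊A⌋) ⌊A⌋) : ℝ) = 2 * ⌊A⌋ + 1 := by exact_mod_cast hcard
  linarith [Int.floor_le A]

theorem card_latticeBox_le {X₁ X₂ : ℝ} (h₁ : 1 ≤ X₁) (h₂ : 1 ≤ X₂) :
    (#(latticeBox X₁ X₂) : ℝ) ≤ 9 * (X₁ * X₂) := by
  rw [latticeBox, card_product, Nat.cast_mul]
  calc _ ≤ (3 * X₁) * (3 * X₂) :=
        mul_le_mul (card_Icc_neg_floor_le h₁) (card_Icc_neg_floor_le h₂) (by positivity)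
          (by linarith)
    _ = 9 * (X₁ * X₂) := by ring

theorem card_product_union_product_le {α β : Type*} [DecidableEq α] [DecidableEq β]
    {Kx Bx : Finset α} {Ky By : Finset β} (hKx : #Kx ≤ 2) (hKy : #Ky ≤ 2) :
    #(Kx ×ˢ By ∪ Bx ×ˢ Ky) ≤ 2 * #By + 2 * #Bx := by
  refine (card_union_le _ _).trans ?_
  rw [card_product, card_product, mul_comm _ #Ky]
  exact add_le_add (Nat.mul_le_mul_right _ hKx) (Nat.mul_le_mul_right _ hKy)

theorem MvPolynomial.not_irreducible_of_eq_mul {σ R : Type*} [CommSemiring R] [Nontrivial R]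
    {f g h : MvPolynomial σ R} (hf : f = g * h) (hg : constantCoeff g = 0)
    (hh : constantCoeff h = 0) : ¬Irreducible f := fun hirr => by
  rcases hirr.isUnit_or_isUnit hf with hu | hu
  · simpa [hg] using hu.map constantCoeff
  · simpa [hh] using hu.map constantCoeff

section TrilinearForm

noncomputable def trilinearForm (a111 a112 a121 a122 a211 a212 a221 a222 : ℤ) :
    MvPolynomial (Fin 6) ℤ :=
  C a111 * X 0 * X 2 * X 4 + C a112 * X 0 * X 2 * X 5 +
    C a121 * X 0 * X 3 * X 4 + C a122 * X 0 * X 3 * X 5 +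
    C a211 * X 1 * X 2 * X 4 + C a212 * X 1 * X 2 * X 5 +
    C a221 * X 1 * X 3 * X 4 + C a222 * X 1 * X 3 * X 5

variable {a111 a112 a121 a122 a211 a212 a221 a222 : ℤ}

theorem slice_ne_zero_of_irreducible
    (hirr : Irreducible (trilinearForm a111 a112 a121 a122 a211 a212 a221 a222))
    {z : ℤ × ℤ} (hz : Int.gcd z.1 z.2 = 1) :
    ¬(a111 * z.1 + a112 * z.2 = 0 ∧ a121 * z.1 + a122 * z.2 = 0 ∧
      a211 * z.1 + a212 * z.2 = 0 ∧ a221 * z.1 + a222 * z.2 = 0) := by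
  rintro ⟨h₁₁, h₁₂, h₂₁, h₂₂⟩
  have hcop := Int.isCoprime_iff_gcd_eq_one.2 hz
  obtain ⟨t₁₁, rfl, rfl⟩ :=
    hcop.exists_eq_mul_of_mul_add_mul_eq_zero (a₁ := a111) (a₂ := a112) (by linear_combination h₁₁)
  obtain ⟨t₁₂, rfl, rfl⟩ :=
    hcop.exists_eq_mul_of_mul_add_mul_eq_zero (a₁ := a121) (a₂ := a122) (by linear_combination h₁₂)
  obtain ⟨t₂₁, rfl, rfl⟩ :=
    hcop.exists_eq_mul_of_mul_add_mul_eq_zero (a₁ := a211) (a₂ := a212) (by linear_combination h₂₁)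
  obtain ⟨t₂₂, rfl, rfl⟩ :=
    hcop.exists_eq_mul_of_mul_add_mul_eq_zero (a₁ := a221) (a₂ := a222) (by linear_combination h₂₂)
  refine not_irreducible_of_eq_mul (g := C z.2 * X 4 - C z.1 * X 5)
    (h := C t₁₁ * X 0 * X 2 + C t₁₂ * X 0 * X 3 + C t₂₁ * X 1 * X 2 + C t₂₂ * X 1 * X 3)
    ?_ (by simp) (by simp) hirr
  simp only [trilinearForm, map_mul, map_neg]
  ring

theorem discriminant_ne_zero_of_irreducible
    (hirr : Irreducible (trilinearForm a111 a112 a121 a122 a211 a212 a221 a222)) :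
    ¬(a111 * a221 - a121 * a211 = 0 ∧
      a111 * a222 + a112 * a221 - a212 * a121 - a211 * a122 = 0 ∧
      a112 * a222 - a122 * a212 = 0) := by
  rintro ⟨h₁, h₂, h₃⟩
  -- `A = u vᵀ` with `u` primitive and `B = w sᵀ` with `s` primitive
  obtain ⟨u₁, u₂, v₁, v₂, hu, rfl, rfl, rfl, rfl⟩ :=
    Int.exists_primitive_outer_of_det_eq_zero (α := a111) (β := a121) (γ := a211) (δ := a221)
      (by linear_combination h₁)
  obtain ⟨s₁, s₂, w₁, w₂, hs, rfl, rfl, rfl, rfl⟩ :=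
    Int.exists_primitive_outer_of_det_eq_zero (α := a112) (β := a212) (γ := a122) (δ := a222)
      (by linear_combination h₃)
  have hcross : (u₁ * w₂ - u₂ * w₁) * (v₁ * s₂ - v₂ * s₁) = 0 := by linear_combination h₂
  rcases mul_eq_zero.1 hcross with h | h
  · obtain ⟨t, rfl, rfl⟩ := (Int.isCoprime_iff_gcd_eq_one.2 hu).exists_eq_mul_of_mul_eq_mul
      (by linear_combination h : u₁ * w₂ = u₂ * w₁)
    refine not_irreducible_of_eq_mul (g := C u₁ * X 0 + C u₂ * X 1)
      (h := C v₁ * X 2 * X 4 + C v₂ * X 3 * X 4 + C (t * s₁) * X 2 * X 5 + C (t * s₂) * X 3 * X 5)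
      ?_ (by simp) (by simp) hirr
    simp only [trilinearForm, map_mul]
    ring
  · obtain ⟨t, rfl, rfl⟩ := (Int.isCoprime_iff_gcd_eq_one.2 hs).exists_eq_mul_of_mul_eq_mul
      (by linear_combination -h : s₁ * v₂ = s₂ * v₁)
    refine not_irreducible_of_eq_mul
      (g := C (t * u₁) * X 0 * X 4 + C (t * u₂) * X 1 * X 4 + C w₁ * X 0 * X 5 + C w₂ * X 1 * X 5)
      (h := C s₁ * X 2 + C s₂ * X 3) ?_ (by simp) (by simp) hirr
    simp only [trilinearForm, map_mul]
    ring

end TrilinearForm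

/-- There is an absolute constant `C > 0` such that for every 2×2×2
integer hypermatrix whose trilinear form `f` is irreducible in
`ℤ[x₁,x₂,y₁,y₂,z₁,z₂]`, and all `X₁,X₂,Y₁,Y₂,Z₁,Z₂ ≥ 1`, the number of triples of
primitive vectors `(x,y,z)` in the box with `f(x,y,z) = 0` and `Δ_xy(z) = 0` is at
most `C(X₁X₂ + Y₁Y₂)`. -/
theorem stmt_13 : ∃ C : ℝ, 0 < C ∧
    ∀ (a111 a112 a121 a122 a211 a212 a221 a222 : ℤ)
      (f : MvPolynomial (Fin 6) ℤ),
      f = MvPolynomial.C a111 * X 0 * X 2 * X 4 + MvPolynomial.C a112 * X 0 * X 2 * X 5 +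
          MvPolynomial.C a121 * X 0 * X 3 * X 4 + MvPolynomial.C a122 * X 0 * X 3 * X 5 +
          MvPolynomial.C a211 * X 1 * X 2 * X 4 + MvPolynomial.C a212 * X 1 * X 2 * X 5 +
          MvPolynomial.C a221 * X 1 * X 3 * X 4 + MvPolynomial.C a222 * X 1 * X 3 * X 5 →
      Irreducible f →
      ∀ X₁ X₂ Y₁ Y₂ Z₁ Z₂ : ℝ, 1 ≤ X₁ → 1 ≤ X₂ → 1 ≤ Y₁ → 1 ≤ Y₂ → 1 ≤ Z₁ → 1 ≤ Z₂ →
      (Set.ncard {p : (ℤ × ℤ) × (ℤ × ℤ) × (ℤ × ℤ) |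
          (|p.1.1| : ℝ) ≤ X₁ ∧ (|p.1.2| : ℝ) ≤ X₂ ∧
          (|p.2.1.1| : ℝ) ≤ Y₁ ∧ (|p.2.1.2| : ℝ) ≤ Y₂ ∧
          (|p.2.2.1| : ℝ) ≤ Z₁ ∧ (|p.2.2.2| : ℝ) ≤ Z₂ ∧
          Int.gcd p.1.1 p.1.2 = 1 ∧ Int.gcd p.2.1.1 p.2.1.2 = 1 ∧
          Int.gcd p.2.2.1 p.2.2.2 = 1 ∧
          a111 * p.1.1 * p.2.1.1 * p.2.2.1 + a112 * p.1.1 * p.2.1.1 * p.2.2.2 +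
            a121 * p.1.1 * p.2.1.2 * p.2.2.1 + a122 * p.1.1 * p.2.1.2 * p.2.2.2 +
            a211 * p.1.2 * p.2.1.1 * p.2.2.1 + a212 * p.1.2 * p.2.1.1 * p.2.2.2 +
            a221 * p.1.2 * p.2.1.2 * p.2.2.1 + a222 * p.1.2 * p.2.1.2 * p.2.2.2 = 0 ∧
          (a111 * a221 - a121 * a211) * p.2.2.1 ^ 2 +
            (a111 * a222 + a112 * a221 - a212 * a121 - a211 * a122) * p.2.2.1 * p.2.2.2 +
            (a112 * a222 - a122 * a212) * p.2.2.2 ^ 2 = 0} : ℝ)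
        ≤ C * (X₁ * X₂ + Y₁ * Y₂) := by
  refine ⟨72, by norm_num, ?_⟩
  intro a111 a112 a121 a122 a211 a212 a221 a222 f hf hirr X₁ X₂ Y₁ Y₂ Z₁ Z₂ hX₁ hX₂ hY₁ hY₂ _ _
  subst hf
  obtain ⟨S, hS, hSroots⟩ :=
    Int.exists_finset_primitive_zeros_quadratic (discriminant_ne_zero_of_irreducible hirr)
  refine (Nat.cast_le.2 (Set.ncard_le_card_mul_of_fibers (S := S) (g := fun p => p.2.2)
    (n := 2 * #(latticeBox Y₁ Y₂) + 2 * #(latticeBox X₁ X₂)) ?_ ?_)).trans ?_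
  · rintro ⟨_, _, z⟩ ⟨-, -, -, -, -, -, -, -, hz, -, hΔ⟩
    exact hSroots z hz hΔ
  · rintro ⟨_, _, z⟩ ⟨-, -, -, -, -, -, -, -, hz, -, hΔ⟩
    obtain ⟨Kx, Ky, hKx, hKy, hK⟩ := Int.exists_finsets_of_bilinear_eq_zero
      (by linear_combination hΔ) (slice_ne_zero_of_irreducible hirr hz)
    refine ⟨(Kx ×ˢ latticeBox Y₁ Y₂ ∪ latticeBox X₁ X₂ ×ˢ Ky).image fun q => (q.1, q.2, z),
      card_image_le.trans (card_product_union_product_le hKx hKy), ?_⟩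
    rintro ⟨x, y, z'⟩ ⟨hx₁, hx₂, hy₁, hy₂, -, -, hx, hy, -, hf, -⟩ rfl
    refine mem_image.2 ⟨(x, y), ?_, rfl⟩
    rcases hK x y hx hy (by linear_combination hf) with h | h
    · exact mem_union_left _ (mem_product.2 ⟨h, mem_latticeBox hy₁ hy₂⟩)
    · exact mem_union_right _ (mem_product.2 ⟨mem_latticeBox hx₁ hx₂, h⟩)
  · have hS' : (#S : ℝ) ≤ 4 := by exact_mod_cast hS
    push_cast
    calc (#S : ℝ) * (2 * #(latticeBox Y₁ Y₂) + 2 * #(latticeBox X₁ X₂))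
        ≤ 4 * (2 * (9 * (Y₁ * Y₂)) + 2 * (9 * (X₁ * X₂))) := by
          gcongr
          · exact card_latticeBox_le hY₁ hY₂
          · exact card_latticeBox_le hX₁ hX₂
      _ = 72 * (X₁ * X₂ + Y₁ * Y₂) := by ring
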